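/- arXiv:2206.09451 — 4 statements merged into one kernel-verified Lean document; each statement's English description precedes it below -/
import Mathlib

section
/- Suppose X has the FOED property with function F and let μ_t denote the law of X_t. Then for 0 ≤ s < t, μ_t(dz) = μ_s(dz) · exp(∫ₛᵗ F(u,z) du); in particular μ_t is absolutely continuous with respect to μ_s with Radon–Nikodym derivative dμ_t/dμ_s(z) = exp(∫ₛᵗ F(u,z) du). -/
/-!
Testing the FOED identity against indicators of Borel sets says that every law `μ_t` has density
`exp (∫₀ᵗ F(u,·) du)` with respect to the initial law `μ_0`. Since these densities factor as
`exp (∫₀ᵗ F) = exp (∫₀ˢ F) · exp (∫ₛᵗ F)`, the chain rule for densities gives `μ_t` as `μ_s` with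
density `exp (∫ₛᵗ F)`.
-/

open MeasureTheory Set

theorem MeasureTheory.StronglyMeasurable.intervalIntegral_prod_left {α G : Type*}
    [MeasurableSpace α] [NormedAddCommGroup G] [NormedSpace ℝ G] {μ : Measure ℝ} [SFinite μ]
    {f : ℝ → α → G} (hf : StronglyMeasurable (Function.uncurry f)) (a b : ℝ) :
    StronglyMeasurable fun z => ∫ u in a..b, f u z ∂μ :=
  (hf.integral_prod_left (μ := μ.restrict (Ioc a b))).sub
    (hf.integral_prod_left (μ := μ.restrict (Ioc b a)))

theorem MeasureTheory.Measure.eq_withDensity_of_measureReal_eq_setIntegral {α : Type*}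
    [MeasurableSpace α] {μ ν : Measure α} [IsFiniteMeasure ν] {g : α → ℝ}
    (hg_nonneg : 0 ≤ᵐ[μ] g) (hg_int : Integrable g μ)
    (h : ∀ s, MeasurableSet s → ν.real s = ∫ x in s, g x ∂μ) :
    ν = μ.withDensity fun x => ENNReal.ofReal (g x) := by
  ext s hs
  rw [withDensity_apply _ hs, ← ofReal_integral_eq_lintegral_ofReal hg_int.integrableOn
    (ae_restrict_of_ae hg_nonneg), ← h s hs, ofReal_measureReal (measure_ne_top ν s)]

section FOED

variable {Ω E : Type*} [MeasurableSpace Ω] [MeasurableSpace E] {P : Measure Ω}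
  {X : ℝ → Ω → E} {F : ℝ → E → ℝ}

variable (P X F) in
def HasFOED : Prop :=
  ∀ f : E → ℝ, Measurable f → (∃ C, ∀ x, |f x| ≤ C) → ∀ t ≥ (0:ℝ),
    ∫ ω, f (X t ω) ∂P = ∫ ω, f (X 0 ω) * Real.exp (∫ u in (0:ℝ)..t, F u (X 0 ω)) ∂P

theorem HasFOED.integral_map_eq_integral_map_zero_mul_exp (hFOED : HasFOED P X F)
    (hX : ∀ t, Measurable (X t)) (hF : Measurable (Function.uncurry F))
    {f : E → ℝ} (hf : Measurable f) (hf_bdd : ∃ C, ∀ x, |f x| ≤ C) {t : ℝ} (ht : 0 ≤ t) :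
    ∫ z, f z ∂P.map (X t) = ∫ z, f z * Real.exp (∫ u in (0:ℝ)..t, F u z) ∂P.map (X 0) := by
  have hweight : Measurable fun z => Real.exp (∫ u in (0:ℝ)..t, F u z) :=
    (hF.stronglyMeasurable.intervalIntegral_prod_left 0 t).measurable.exp
  rw [integral_map (hX t).aemeasurable hf.aestronglyMeasurable,
    integral_map (f := fun z => f z * Real.exp (∫ u in (0:ℝ)..t, F u z)) (hX 0).aemeasurable
      (hf.mul hweight).aestronglyMeasurable,
    hFOED f hf hf_bdd t ht]

variable [IsProbabilityMeasure P]

theorem HasFOED.map_eq_withDensity_map_zero (hFOED : HasFOED P X F)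
    (hX : ∀ t, Measurable (X t)) (hF : Measurable (Function.uncurry F)) {t : ℝ} (ht : 0 ≤ t) :
    P.map (X t) = (P.map (X 0)).withDensity
      fun z => ENNReal.ofReal (Real.exp (∫ u in (0:ℝ)..t, F u z)) := by
  have hFOED_map := fun {f} hf hf_bdd =>
    hFOED.integral_map_eq_integral_map_zero_mul_exp hX hF (f := f) hf hf_bdd ht
  have : IsProbabilityMeasure (P.map (X t)) := Measure.isProbabilityMeasure_map (hX t).aemeasurable
  -- Testing against `f = 1` gives the weight total mass one, and a nonzero integral forces
  -- integrability.
  have hweight_int : Integrable (fun z => Real.exp (∫ u in (0:ℝ)..t, F u z)) (P.map (X 0)) := by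
    refine Integrable.of_integral_ne_zero ?_
    have h_one := hFOED_map (f := fun _ => 1) measurable_const ⟨1, fun _ => by simp⟩
    simp only [one_mul, integral_const, probReal_univ, smul_eq_mul, mul_one] at h_one
    rw [← h_one]
    exact one_ne_zero
  refine Measure.eq_withDensity_of_measureReal_eq_setIntegral
    (ae_of_all _ fun _ => Real.exp_nonneg _) hweight_int fun s hs => ?_
  have h_ind := hFOED_map (f := s.indicator 1) (measurable_one.indicator hs)
    ⟨1, fun x => by by_cases hx : x ∈ s <;> simp [hx]⟩
  have h_one_mul (z : E) : s.indicator 1 z * Real.exp (∫ u in (0:ℝ)..t, F u z)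
      = s.indicator (fun z => Real.exp (∫ u in (0:ℝ)..t, F u z)) z := by
    by_cases hz : z ∈ s <;> simp [hz]
  simp only [h_one_mul] at h_ind
  rwa [integral_indicator_one hs, integral_indicator hs] at h_ind

end FOED

/-- If `X` has the FOED property with function `F` and `μ_t` is the law of `X_t`, then for
`0 ≤ s < t` one has `μ_t(dz) = μ_s(dz) exp(∫ₛᵗ F(u,z) du)`, i.e. `μ_t` is the measure with
density `exp(∫ₛᵗ F(u,·) du)` with respect to `μ_s`. -/
theorem stmt_2 {Ω E : Type*} [MeasurableSpace Ω] [MeasurableSpace E]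
    (P : Measure Ω) [IsProbabilityMeasure P]
    (X : ℝ → Ω → E) (hX : ∀ t, Measurable (X t))
    (F : ℝ → E → ℝ) (hF : Measurable (Function.uncurry F))
    (hFloc : ∀ x : E, ∀ t ≥ (0:ℝ), IntervalIntegrable (fun u => F u x) volume 0 t)
    (hFOED : ∀ f : E → ℝ, Measurable f → (∃ C, ∀ x, |f x| ≤ C) → ∀ t ≥ (0:ℝ),
      ∫ ω, f (X t ω) ∂P
        = ∫ ω, f (X 0 ω) * Real.exp (∫ u in (0:ℝ)..t, F u (X 0 ω)) ∂P) :
    ∀ s t : ℝ, 0 ≤ s → s < t →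
      P.map (X t)
        = (P.map (X s)).withDensity
            (fun z => ENNReal.ofReal (Real.exp (∫ u in s..t, F u z))) := by
  intro s t hs hst
  have ht : 0 ≤ t := hs.trans hst.le
  have hI (a b : ℝ) : Measurable fun z => ∫ u in a..b, F u z :=
    (hF.stronglyMeasurable.intervalIntegral_prod_left a b).measurable
  have hadd (z : E) : (∫ u in (0:ℝ)..s, F u z) + ∫ u in s..t, F u z = ∫ u in (0:ℝ)..t, F u z :=
    intervalIntegral.integral_add_adjacent_intervals (hFloc z s hs)
      ((hFloc z t ht).mono_set (uIcc_subset_uIcc (mem_uIcc_of_le hs hst.le) right_mem_uIcc))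
  have hFOED' : HasFOED P X F := hFOED
  rw [hFOED'.map_eq_withDensity_map_zero hX hF ht, hFOED'.map_eq_withDensity_map_zero hX hF hs,
    ← withDensity_mul _ (hI 0 s).exp.ennreal_ofReal (hI s t).exp.ennreal_ofReal]
  congr 1
  funext z
  simp only [Pi.mul_apply, ← ENNReal.ofReal_mul (Real.exp_nonneg _), ← Real.exp_add, hadd]
end

section
/- Let B be a standard real Brownian motion and a > 0, and set X_t = B_{t+a} (the Gauss–Gauss process). Then X has the FOED property with function F_a satisfying exp(∫₀ᵗ F_a(u,z) du) = √(a/(a+t)) · exp(z² t / (2a(a+t))) for all t ≥ 0 and z ∈ ℝ. -/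
/-!
`N(0, a + t)` is absolutely continuous with respect to `N(0, a)`, with density
`√(a/(a+t)) exp(z² t / (2a(a+t)))`. Transporting through the laws of `X_t` and `X_0` turns the
FOED identity into exactly this change of measure, and the required `F_a(u, z)` is the
`u`-derivative of the logarithm of that density, `-1/(2(a+u)) + z²/(2(a+u)²)`.
-/

open MeasureTheory ProbabilityTheory Real

namespace ProbabilityTheory

noncomputable def gaussianRatio (μ v w x : ℝ) : ℝ :=
  √(v / w) * exp ((x - μ) ^ 2 * (w - v) / (2 * v * w))

lemma gaussianPDFReal_eq_mul_gaussianRatio (μ : ℝ) {v w : ℝ} (hv : 0 < v) (hw : 0 < w)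
    (x : ℝ) :
    gaussianPDFReal μ w.toNNReal x = gaussianPDFReal μ v.toNNReal x * gaussianRatio μ v w x := by
  have hsqrt : √(v / w) = √(2 * π * v) / √(2 * π * w) := by
    rw [← sqrt_div (by positivity)]
    congr 1
    field_simp
  have hexp : exp (-(x - μ) ^ 2 / (2 * v)) * exp ((x - μ) ^ 2 * (w - v) / (2 * v * w))
      = exp (-(x - μ) ^ 2 / (2 * w)) := by
    rw [← exp_add]
    congr 1
    field_simp
    ring
  have hv' : √(2 * π * v) ≠ 0 := by positivity
  simp only [gaussianPDFReal, gaussianRatio, Real.coe_toNNReal _ hv.le,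
    Real.coe_toNNReal _ hw.le, hsqrt, ← hexp]
  field_simp

lemma integral_gaussianReal_eq_integral_mul_gaussianRatio (μ : ℝ) {v w : ℝ} (hv : 0 < v)
    (hw : 0 < w) (g : ℝ → ℝ) :
    ∫ x, g x ∂gaussianReal μ w.toNNReal
      = ∫ x, g x * gaussianRatio μ v w x ∂gaussianReal μ v.toNNReal := by
  rw [integral_gaussianReal_eq_integral_smul (by simpa using hw),
    integral_gaussianReal_eq_integral_smul (by simpa using hv)]
  congr 1 with x
  rw [gaussianPDFReal_eq_mul_gaussianRatio μ hv hw, smul_eq_mul, smul_eq_mul]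
  ring

noncomputable def foedRate (a u z : ℝ) : ℝ :=
  -(1 / (2 * (a + u))) + z ^ 2 / (2 * (a + u) ^ 2)

noncomputable def logGaussianRatio (a z s : ℝ) : ℝ :=
  (log a - log (a + s)) / 2 + z ^ 2 * s / (2 * a * (a + s))

lemma hasDerivAt_logGaussianRatio {a s : ℝ} (ha : 0 < a) (has : 0 < a + s) (z : ℝ) :
    HasDerivAt (logGaussianRatio a z) (foedRate a s z) s := by
  have hlin : HasDerivAt (fun x : ℝ => a + x) 1 s := (hasDerivAt_id s).const_add a
  have hlog := ((hlin.log has.ne').const_sub (log a)).div_const 2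
  have hfrac := ((hasDerivAt_id' s).const_mul (z ^ 2)).div (hlin.const_mul (2 * a))
    (by positivity)
  refine (hlog.add hfrac).congr_deriv ?_
  rw [foedRate]
  field_simp
  ring

lemma exp_logGaussianRatio {a t : ℝ} (ha : 0 < a) (hat : 0 < a + t) (z : ℝ) :
    exp (logGaussianRatio a z t) = gaussianRatio 0 a (a + t) z := by
  rw [logGaussianRatio, gaussianRatio, exp_add, sqrt_eq_rpow, rpow_def_of_pos (by positivity),
    log_div ha.ne' hat.ne', sub_zero, add_sub_cancel_left]
  ring_nf

lemma exp_integral_foedRate {a t : ℝ} (ha : 0 < a) (hat : 0 < a + t) (z : ℝ) :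
    exp (∫ u in (0 : ℝ)..t, foedRate a u z) = gaussianRatio 0 a (a + t) z := by
  have hpos : ∀ s ∈ Set.uIcc 0 t, 0 < a + s := fun s hs => by
    rcases Set.mem_uIcc.mp hs with ⟨h0s, -⟩ | ⟨hts, -⟩ <;> linarith
  have hcont : ContinuousOn (fun u => foedRate a u z) (Set.uIcc 0 t) := by
    refine ContinuousOn.add (ContinuousOn.neg ?_) ?_ <;>
      exact continuousOn_const.div (by fun_prop) fun s hs => by have := hpos s hs; positivity
  rw [intervalIntegral.integral_eq_sub_of_hasDerivAt
      (fun s hs => hasDerivAt_logGaussianRatio ha (hpos s hs) z) hcont.intervalIntegrable]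
  simpa [logGaussianRatio] using exp_logGaussianRatio ha hat z

end ProbabilityTheory

theorem stmt_5_general {Ω : Type*} [MeasurableSpace Ω] (P : Measure Ω)
    (a : ℝ) (ha : 0 < a)
    (X : ℝ → Ω → ℝ) (hX : ∀ t, Measurable (X t))
    (hlaw : ∀ t ≥ (0:ℝ), P.map (X t) = ProbabilityTheory.gaussianReal 0 (t + a).toNNReal) :
    ∃ F : ℝ → ℝ → ℝ,
      (∀ f : ℝ → ℝ, Measurable f → (∃ C, ∀ x, |f x| ≤ C) → ∀ t ≥ (0:ℝ),
        ∫ ω, f (X t ω) ∂P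
          = ∫ ω, f (X 0 ω) * Real.exp (∫ u in (0:ℝ)..t, F u (X 0 ω)) ∂P) ∧
      (∀ t ≥ (0:ℝ), ∀ z : ℝ,
        Real.exp (∫ u in (0:ℝ)..t, F u z)
          = Real.sqrt (a / (a + t)) * Real.exp (z ^ 2 * t / (2 * a * (a + t)))) := by
  refine ⟨foedRate a, fun f hf _ t ht => ?_, fun t ht z => ?_⟩
  · have hat : 0 < a + t := by linarith
    have hlaw0 : P.map (X 0) = gaussianReal 0 a.toNNReal := by simpa using hlaw 0 le_rfl
    have hratio : Measurable (gaussianRatio 0 a (a + t)) := by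
      unfold gaussianRatio; fun_prop
    simp_rw [exp_integral_foedRate ha hat]
    calc ∫ ω, f (X t ω) ∂P = ∫ x, f x ∂gaussianReal 0 (a + t).toNNReal := by
          rw [add_comm a, ← hlaw t ht, integral_map (hX t).aemeasurable hf.aestronglyMeasurable]
      _ = ∫ x, f x * gaussianRatio 0 a (a + t) x ∂gaussianReal 0 a.toNNReal :=
          integral_gaussianReal_eq_integral_mul_gaussianRatio 0 ha hat f
      _ = ∫ ω, f (X 0 ω) * gaussianRatio 0 a (a + t) (X 0 ω) ∂P := by
          rw [← hlaw0]
          exact integral_map (hX 0).aemeasurable (hf.mul hratio).aestronglyMeasurable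
  · simpa [gaussianRatio] using exp_integral_foedRate ha (by linarith : 0 < a + t) z

/-- The Gauss–Gauss process `X_t = B_{t+a}` (so `X_t ~ N(0, t+a)`) has the FOED property with
`exp(∫₀ᵗ F_a(u,z) du) = √(a/(a+t)) exp(z² t / (2a(a+t)))`. -/
theorem stmt_5 {Ω : Type*} [MeasurableSpace Ω] (P : Measure Ω) [IsProbabilityMeasure P]
    (a : ℝ) (ha : 0 < a)
    (X : ℝ → Ω → ℝ) (hX : ∀ t, Measurable (X t))
    (hlaw : ∀ t ≥ (0:ℝ), P.map (X t) = ProbabilityTheory.gaussianReal 0 (t + a).toNNReal) :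
    ∃ F : ℝ → ℝ → ℝ,
      (∀ f : ℝ → ℝ, Measurable f → (∃ C, ∀ x, |f x| ≤ C) → ∀ t ≥ (0:ℝ),
        ∫ ω, f (X t ω) ∂P
          = ∫ ω, f (X 0 ω) * Real.exp (∫ u in (0:ℝ)..t, F u (X 0 ω)) ∂P) ∧
      (∀ t ≥ (0:ℝ), ∀ z : ℝ,
        Real.exp (∫ u in (0:ℝ)..t, F u z)
          = Real.sqrt (a / (a + t)) * Real.exp (z ^ 2 * t / (2 * a * (a + t)))) :=
  stmt_5_general P a ha X hX hlaw
end

section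
/- Let μ be a finite signed Borel measure on ℝ such that ∫ e^{λx} d|μ|(x) < ∞ and ∫ e^{λx} dμ(x) = 0 for every λ ∈ ℝ. Then μ = 0. -/
/-!
When every exponential moment is finite, the complex moment generating function
`z ↦ ∫ exp (z x) dν` of a finite measure `ν` is entire. Two such functions that agree on the real
axis therefore agree everywhere, in particular on the imaginary axis, where they are the Fourier
transforms, and these separate finite measures. Applied to the two parts of the Jordan
decomposition of `μ`, this makes them equal, hence `μ = 0`.
-/

open MeasureTheory ProbabilityTheory

theorem MeasureTheory.Measure.ext_of_mgf_id_eq {ν ν' : Measure ℝ} [IsFiniteMeasure ν]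
    [IsFiniteMeasure ν'] (hint : ∀ t : ℝ, Integrable (fun x => Real.exp (t * x)) ν)
    (h : mgf id ν = mgf id ν') : ν = ν' := by
  have hzero : ν = 0 ↔ ν' = 0 := by
    rw [← Measure.measure_univ_eq_zero, ← Measure.measure_univ_eq_zero,
      ← measureReal_eq_zero_iff, ← measureReal_eq_zero_iff, ← mgf_zero', h, mgf_zero']
  have hstrip : integrableExpSet id ν = Set.univ := Set.eq_univ_of_forall hint
  refine Measure.ext_of_complexMGF_id_eq (funext fun z => eqOn_complexMGF_of_mgf' h hzero ?_)
  simp [hstrip]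

theorem MeasureTheory.SignedMeasure.eq_zero_of_posPart_eq_negPart {α : Type*}
    [MeasurableSpace α] (s : SignedMeasure α)
    (h : s.toJordanDecomposition.posPart = s.toJordanDecomposition.negPart) : s = 0 := by
  rw [← s.toSignedMeasure_toJordanDecomposition, JordanDecomposition.toSignedMeasure]
  simp only [h, sub_self]

/-- Injectivity of the two-sided Laplace transform: a finite signed Borel measure `μ` on `ℝ` with
`∫ e^{λx} d|μ| < ∞` for all `λ` and vanishing two-sided Laplace transform is zero. The Laplace
transform of the signed measure is expressed via its Jordan decomposition. -/
theorem stmt_9 (μ : MeasureTheory.SignedMeasure ℝ)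
    (hint : ∀ l : ℝ, Integrable (fun x => Real.exp (l * x)) μ.totalVariation)
    (hlap : ∀ l : ℝ,
      ∫ x, Real.exp (l * x) ∂μ.toJordanDecomposition.posPart
        = ∫ x, Real.exp (l * x) ∂μ.toJordanDecomposition.negPart) :
    μ = 0 := by
  have hpos : ∀ l : ℝ, Integrable (fun x => Real.exp (l * x)) μ.toJordanDecomposition.posPart :=
    fun l => (hint l).mono_measure (Measure.le_add_right le_rfl)
  exact μ.eq_zero_of_posPart_eq_negPart (Measure.ext_of_mgf_id_eq hpos (funext hlap))
end

section
/- Let X be a Markov process with the FOED property (function F) and initial law γ, and let Λ_t f(z) = E[f(X_0) | X_t = z] denote the bridge operator. Then for bounded Borel f₀, f₁ and 0 < t₁: E[f₀(X_0) f₁(X_{t₁})] = E[ f₁(X_0) · exp(∫₀^{t₁} F(u,X_0) du) · (Λ_{t₁} f₀)(X_0) ]. -/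
open MeasureTheory

/-! The FOED identity for nonnegative `g` says that the law of `X_t` is the image under `X_0` of
`P` reweighted by the density `exp (∫₀ᵗ F(u, X_0) du)`. Hence it holds for every Borel `g`,
in particular for `g = f₁ · L`, which need not be bounded. Combined with the tower property
`E[f₀(X_0) f₁(X_{t₁})] = E[f₁(X_{t₁}) L(X_{t₁})]` this is the claim. -/

theorem measurable_intervalIntegral_of_uncurry {F : ℝ → ℝ → ℝ}
    (hF : Measurable (Function.uncurry F)) (a b : ℝ) : Measurable fun x => ∫ u in a..b, F u x := by
  simp only [intervalIntegral]
  exact (hF.stronglyMeasurable.integral_prod_left.sub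
    hF.stronglyMeasurable.integral_prod_left).measurable

section

variable {Ω β : Type*} [MeasurableSpace Ω] [MeasurableSpace β] {P : Measure Ω}

theorem map_eq_map_withDensity_of_integral_comp_eq [IsProbabilityMeasure P] {Y Z : Ω → β}
    (hY : Measurable Y) (hZ : Measurable Z) {ρ : Ω → ℝ} (hρ : Measurable ρ) (hρ₀ : ∀ ω, 0 ≤ ρ ω)
    (h : ∀ g : β → ℝ, Measurable g → (∀ x, 0 ≤ g x) →
      ∫ ω, g (Y ω) ∂P = ∫ ω, g (Z ω) * ρ ω ∂P) :
    P.map Y = (P.withDensity fun ω => ENNReal.ofReal (ρ ω)).map Z := by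
  set Q := P.withDensity fun ω => ENNReal.ofReal (ρ ω)
  have hreal : ∀ s, MeasurableSet s → P.real (Y ⁻¹' s) = (Q (Z ⁻¹' s)).toReal := by
    intro s hs
    have := h (s.indicator 1) (measurable_one.indicator hs) (Set.indicator_nonneg (by simp))
    have hY' : ∀ ω, s.indicator 1 (Y ω) = (Y ⁻¹' s).indicator (1 : Ω → ℝ) ω := fun ω => by
      by_cases hω : Y ω ∈ s <;> simp [hω]
    have hZ' : ∀ ω, s.indicator 1 (Z ω) * ρ ω = (Z ⁻¹' s).indicator ρ ω := fun ω => by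
      by_cases hω : Z ω ∈ s <;> simp [hω]
    simp only [hY', hZ'] at this
    rw [integral_indicator_one (hY hs), integral_indicator (hZ hs),
      integral_eq_lintegral_of_nonneg_ae (.of_forall hρ₀) hρ.aestronglyMeasurable] at this
    rw [this, withDensity_apply _ (hZ hs)]
  have hQ : Q Set.univ ≠ ⊤ := by
    intro htop
    simpa [htop] using hreal Set.univ MeasurableSet.univ
  ext s hs
  rw [Measure.map_apply hY hs, Measure.map_apply hZ hs,
    ← ENNReal.toReal_eq_toReal_iff' (measure_ne_top P _)
      (ne_top_of_le_ne_top hQ (measure_mono (Set.subset_univ _)))]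
  exact hreal s hs

theorem integral_comp_eq_integral_comp_mul_of_nonneg [IsProbabilityMeasure P] {Y Z : Ω → β}
    (hY : Measurable Y) (hZ : Measurable Z) {ρ : Ω → ℝ} (hρ : Measurable ρ) (hρ₀ : ∀ ω, 0 ≤ ρ ω)
    (h : ∀ g : β → ℝ, Measurable g → (∀ x, 0 ≤ g x) →
      ∫ ω, g (Y ω) ∂P = ∫ ω, g (Z ω) * ρ ω ∂P)
    {g : β → ℝ} (hg : Measurable g) :
    ∫ ω, g (Y ω) ∂P = ∫ ω, g (Z ω) * ρ ω ∂P := by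
  calc ∫ ω, g (Y ω) ∂P
      = ∫ x, g x ∂(P.withDensity fun ω => ENNReal.ofReal (ρ ω)).map Z := by
        rw [← map_eq_map_withDensity_of_integral_comp_eq hY hZ hρ hρ₀ h,
          integral_map hY.aemeasurable hg.aestronglyMeasurable]
    _ = ∫ ω, (ρ ω).toNNReal • g (Z ω) ∂P := by
        rw [integral_map hZ.aemeasurable hg.aestronglyMeasurable]
        exact integral_withDensity_eq_integral_smul hρ.real_toNNReal _
    _ = ∫ ω, g (Z ω) * ρ ω ∂P := by
        simp only [NNReal.smul_def, Real.coe_toNNReal _ (hρ₀ _), smul_eq_mul, mul_comm]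

theorem integral_mul_comp_eq_integral_comp_mul_of_condExp [IsFiniteMeasure P] {Y : Ω → β}
    (hY : Measurable Y) {h : Ω → ℝ} (hh : Integrable h P) {g L : β → ℝ} (hg : Measurable g)
    (hhg : Integrable (fun ω => h ω * g (Y ω)) P)
    (hL : (fun ω => L (Y ω)) =ᵐ[P] P[h | MeasurableSpace.comap Y inferInstance]) :
    ∫ ω, h ω * g (Y ω) ∂P = ∫ ω, g (Y ω) * L (Y ω) ∂P := by
  have hgY : StronglyMeasurable[MeasurableSpace.comap Y inferInstance] fun ω => g (Y ω) :=
    (hg.comp (comap_measurable Y)).stronglyMeasurable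
  have hpull := condExp_mul_of_stronglyMeasurable_left hgY
    (hhg.congr (.of_forall fun ω => mul_comm _ _)) hh
  calc ∫ ω, h ω * g (Y ω) ∂P
      = ∫ ω, (P[(fun ω => g (Y ω)) * h | MeasurableSpace.comap Y inferInstance]) ω ∂P := by
        rw [integral_condExp hY.comap_le]
        simp only [Pi.mul_apply, mul_comm]
    _ = ∫ ω, g (Y ω) * L (Y ω) ∂P := by
        refine integral_congr_ae ?_
        filter_upwards [hpull, hL] with ω hω hLω
        rw [hω, Pi.mul_apply, hLω]

end

/-- For a Markov process `X` with the FOED property and bridge operator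
`Λ_{t₁} f₀ = E[f₀(X_0)|X_{t₁} = ·]` (here a Borel version `L`), one has for bounded Borel
`f₀, f₁` and `t₁ > 0`:
`E[f₀(X_0) f₁(X_{t₁})] = E[f₁(X_0) exp(∫₀^{t₁} F(u,X_0) du) (Λ_{t₁} f₀)(X_0)]`. -/
theorem stmt_11 {Ω : Type*} [MeasurableSpace Ω] (P : Measure Ω) [IsProbabilityMeasure P]
    (X : ℝ → Ω → ℝ) (hX : ∀ t, Measurable (X t))
    (F : ℝ → ℝ → ℝ) (hF : Measurable (Function.uncurry F))
    (hFOED : ∀ g : ℝ → ℝ, Measurable g → (∀ x, 0 ≤ g x) → ∀ t ≥ (0:ℝ),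
      ∫ ω, g (X t ω) ∂P
        = ∫ ω, g (X 0 ω) * Real.exp (∫ u in (0:ℝ)..t, F u (X 0 ω)) ∂P)
    (t₁ : ℝ) (ht₁ : 0 < t₁)
    (f₀ f₁ : ℝ → ℝ) (hf₀ : Measurable f₀) (hf₀b : ∃ C, ∀ x, |f₀ x| ≤ C)
    (hf₁ : Measurable f₁) (hf₁b : ∃ C, ∀ x, |f₁ x| ≤ C)
    (L : ℝ → ℝ) (hL : Measurable L)
    (hLcond : (fun ω => L (X t₁ ω))
        =ᵐ[P] P[(fun ω => f₀ (X 0 ω))|MeasurableSpace.comap (X t₁) (by infer_instance)]) :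
    ∫ ω, f₀ (X 0 ω) * f₁ (X t₁ ω) ∂P
      = ∫ ω, f₁ (X 0 ω) * Real.exp (∫ u in (0:ℝ)..t₁, F u (X 0 ω)) * L (X 0 ω) ∂P := by
  obtain ⟨C₀, hC₀⟩ := hf₀b
  obtain ⟨C₁, hC₁⟩ := hf₁b
  have hE : Measurable fun ω => Real.exp (∫ u in (0:ℝ)..t₁, F u (X 0 ω)) :=
    ((measurable_intervalIntegral_of_uncurry hF 0 t₁).comp (hX 0)).exp
  have hf₀X : Integrable (fun ω => f₀ (X 0 ω)) P :=
    .of_bound (hf₀.comp (hX 0)).aestronglyMeasurable C₀ (.of_forall fun ω => hC₀ _)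
  calc ∫ ω, f₀ (X 0 ω) * f₁ (X t₁ ω) ∂P
      = ∫ ω, f₁ (X t₁ ω) * L (X t₁ ω) ∂P :=
        integral_mul_comp_eq_integral_comp_mul_of_condExp (hX t₁) hf₀X hf₁
          (hf₀X.mul_bdd (hf₁.comp (hX t₁)).aestronglyMeasurable (.of_forall fun ω => hC₁ _))
          hLcond
    _ = ∫ ω, f₁ (X 0 ω) * L (X 0 ω) * Real.exp (∫ u in (0:ℝ)..t₁, F u (X 0 ω)) ∂P :=
        integral_comp_eq_integral_comp_mul_of_nonneg (hX t₁) (hX 0) hE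
          (fun _ => (Real.exp_pos _).le) (fun g hg hg₀ => hFOED g hg hg₀ t₁ ht₁.le) (hf₁.mul hL)
    _ = _ := by simp only [mul_right_comm]
end
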